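/- Let Ω ⊂ ℝ^N bounded, and suppose N(v) ≥ R^γ on Ω_{2R} for some γ > 0, 0 < R ≤ 1, and |b|² satisfies sup_t ‖|b|²‖_{L^{p₀}(Ω)} ≤ K for some p₀ > N/2. Then for a cutoff η with |Dη| ≤ 1/R supported in Ω_{2R}: ∫_Ω |b| |Dη| / N(v) dx ≤ C(K,N) R^{N-2+γ₀/2-γ}, where γ₀ = N(1 - 1/p₀) - (N-2) > 0. Consequently, choosing 0 < γ < γ₀/2, the bound ∫_Ω |b||Dη|/N(v) ≤ C R^{N-2} holds. -/

import Mathlib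

/-!
Off `Ω ∩ B(0, 2R)` the integrand vanishes, and on it the integrand is at most `R^{-1-γ} |b|`.
Hölder's inequality with exponents `2p₀ ≥ 1` and its conjugate gives
`∫_{Ω ∩ B_{2R}} |b| ≤ ‖|b|²‖_{L^{p₀}(Ω)}^{1/2} |B_{2R}|^{1 - 1/(2p₀)} ≤ C √K R^{N(1 - 1/(2p₀))}`,
and `N(1 - 1/(2p₀)) - 1 - γ` is exactly `N - 2 + γ₀/2 - γ` with `γ₀ = 2 - N/p₀`.
Since `R ≤ 1`, the bound by `R^{N-2}` follows once `γ < γ₀/2`.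
-/

open MeasureTheory Set Metric

section
variable {α : Type*} [MeasurableSpace α] {μ : Measure α}

theorem lintegral_ofReal_mul_div_le {S : Set α} (hS : MeasurableSet S) {a m : ℝ} (hm : 0 < m)
    {b g h : α → ℝ} (hg : ∀ x, |g x| ≤ a) (hg_zero : ∀ x ∉ S, g x = 0)
    (hh : ∀ x ∈ S, m ≤ h x) :
    ∫⁻ x, ENNReal.ofReal (|b x| * |g x| / h x) ∂μ ≤
      ENNReal.ofReal (a / m) * ∫⁻ x in S, ‖b x‖ₑ ∂μ := by
  have hpt : ∀ x, ENNReal.ofReal (|b x| * |g x| / h x) ≤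
      S.indicator (fun x => ENNReal.ofReal (a / m) * ‖b x‖ₑ) x := by
    intro x
    by_cases hx : x ∈ S
    · rw [indicator_of_mem hx, Real.enorm_eq_ofReal_abs,
        ← ENNReal.ofReal_mul (div_nonneg ((abs_nonneg _).trans (hg x)) hm.le)]
      apply ENNReal.ofReal_le_ofReal
      calc |b x| * |g x| / h x ≤ |b x| * a / m :=
            div_le_div₀ (mul_nonneg (abs_nonneg _) ((abs_nonneg _).trans (hg x)))
              (mul_le_mul_of_nonneg_left (hg x) (abs_nonneg _)) hm (hh x hx)
        _ = a / m * |b x| := by ring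
    · simp [hg_zero x hx]
  calc _ ≤ ∫⁻ x, S.indicator (fun x => ENNReal.ofReal (a / m) * ‖b x‖ₑ) x ∂μ :=
        lintegral_mono hpt
    _ = _ := by rw [lintegral_indicator hS, lintegral_const_mul' _ _ ENNReal.ofReal_ne_top]

theorem lintegral_enorm_le_eLpNorm_sq_rpow {f : α → ℝ} (hf : AEStronglyMeasurable f μ) {p : ℝ}
    (hp : 1 ≤ 2 * p) :
    ∫⁻ x, ‖f x‖ₑ ∂μ ≤
      eLpNorm (fun x => |f x| ^ 2) (ENNReal.ofReal p) μ ^ (2⁻¹ : ℝ) * μ univ ^ (1 - (2 * p)⁻¹) := by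
  have hsq : eLpNorm (fun x => |f x| ^ 2) (ENNReal.ofReal p) μ ^ (2⁻¹ : ℝ) =
      eLpNorm f (ENNReal.ofReal (2 * p)) μ := by
    have h := eLpNorm_norm_rpow f (p := ENNReal.ofReal p) (μ := μ) two_pos
    simp only [Real.norm_eq_abs, Real.rpow_two] at h
    rw [h, ← ENNReal.rpow_mul, ← ENNReal.ofReal_mul (by linarith), mul_comm p]
    norm_num
  rw [← eLpNorm_one_eq_lintegral_enorm, hsq]
  have h := eLpNorm_le_eLpNorm_mul_rpow_measure_univ (p := 1) (q := ENNReal.ofReal (2 * p))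
    (ENNReal.one_le_ofReal.mpr hp) hf
  rwa [ENNReal.toReal_ofReal (by linarith), ENNReal.toReal_one, div_one, one_div] at h

end

section
variable {E : Type*} [NormedAddCommGroup E] [NormedSpace ℝ E] [MeasurableSpace E] [BorelSpace E]
  [FiniteDimensional ℝ E] {μ : Measure E} [μ.IsAddHaarMeasure]

theorem lintegral_inter_ball_enorm_le {Ω : Set E} {f : E → ℝ} (hf : Measurable f) {p K r : ℝ}
    (hp : 1 ≤ 2 * p) (hK : 0 ≤ K)
    (hfK : eLpNorm (fun x => |f x| ^ 2) (ENNReal.ofReal p) (μ.restrict Ω) ≤ ENNReal.ofReal K)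
    (x₀ : E) (hr : 0 < r) :
    ∫⁻ x in Ω ∩ ball x₀ r, ‖f x‖ₑ ∂μ ≤
      ENNReal.ofReal (√K * (r ^ Module.finrank ℝ E * μ.real (ball 0 1)) ^ (1 - (2 * p)⁻¹)) := by
  have he : 0 ≤ 1 - (2 * p)⁻¹ := sub_nonneg.mpr (inv_le_one_of_one_le₀ hp)
  have hL2 : eLpNorm (fun x => |f x| ^ 2) (ENNReal.ofReal p) (μ.restrict (Ω ∩ ball x₀ r)) ^
      (2⁻¹ : ℝ) ≤ ENNReal.ofReal √K := by
    calc _ ≤ ENNReal.ofReal K ^ (2⁻¹ : ℝ) := by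
          gcongr
          exact (eLpNorm_mono_measure _ (Measure.restrict_mono inter_subset_left le_rfl)).trans hfK
      _ = ENNReal.ofReal √K := by
          rw [ENNReal.ofReal_rpow_of_nonneg hK (by norm_num), Real.sqrt_eq_rpow, one_div]
  have hvol : μ (Ω ∩ ball x₀ r) ≤ ENNReal.ofReal (r ^ Module.finrank ℝ E * μ.real (ball 0 1)) := by
    calc _ ≤ μ (ball x₀ r) := measure_mono inter_subset_right
      _ = _ := by
          rw [Measure.addHaar_ball_of_pos μ x₀ hr, ENNReal.ofReal_mul (by positivity),
            ofReal_measureReal measure_ball_lt_top.ne]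
  calc _ ≤ _ := lintegral_enorm_le_eLpNorm_sq_rpow hf.aestronglyMeasurable hp
    _ ≤ ENNReal.ofReal √K *
          ENNReal.ofReal (r ^ Module.finrank ℝ E * μ.real (ball 0 1)) ^ (1 - (2 * p)⁻¹) := by
        rw [Measure.restrict_apply_univ]
        gcongr
    _ = _ := by
        rw [ENNReal.ofReal_rpow_of_nonneg (by positivity) he, ← ENNReal.ofReal_mul (by positivity)]

theorem setLIntegral_ofReal_mul_div_le_rpow {Ω : Set E} (hΩ : MeasurableSet Ω) {R γ p K : ℝ}
    (hR : 0 < R) (hp : 1 ≤ 2 * p) (hK : 0 ≤ K) {b Nv Dη : E → ℝ} (hb : Measurable b)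
    (hNv : ∀ x ∈ Ω ∩ ball 0 (2 * R), R ^ γ ≤ Nv x) (hDη : ∀ x, |Dη x| ≤ 1 / R)
    (hDη_zero : ∀ x ∉ Ω ∩ ball 0 (2 * R), Dη x = 0)
    (hbK : eLpNorm (fun x => |b x| ^ 2) (ENNReal.ofReal p) (μ.restrict Ω) ≤ ENNReal.ofReal K) :
    ∫⁻ x in Ω, ENNReal.ofReal (|b x| * |Dη x| / Nv x) ∂μ ≤
      ENNReal.ofReal (√K * (2 ^ Module.finrank ℝ E * μ.real (ball 0 1)) ^ (1 - (2 * p)⁻¹) *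
        R ^ (Module.finrank ℝ E * (1 - (2 * p)⁻¹) - 1 - γ)) := by
  calc _ ≤ ∫⁻ x, ENNReal.ofReal (|b x| * |Dη x| / Nv x) ∂μ := setLIntegral_le_lintegral _ _
    _ ≤ ENNReal.ofReal (1 / R / R ^ γ) * ∫⁻ x in Ω ∩ ball 0 (2 * R), ‖b x‖ₑ ∂μ :=
        lintegral_ofReal_mul_div_le (hΩ.inter measurableSet_ball) (by positivity) hDη hDη_zero hNv
    _ ≤ ENNReal.ofReal (1 / R / R ^ γ) * ENNReal.ofReal (√K *
          ((2 * R) ^ Module.finrank ℝ E * μ.real (ball 0 1)) ^ (1 - (2 * p)⁻¹)) := by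
        gcongr
        exact lintegral_inter_ball_enorm_le hb hp hK hbK 0 (by positivity)
    _ = _ := by
        have hball : ((2 * R) ^ Module.finrank ℝ E * μ.real (ball 0 1)) ^ (1 - (2 * p)⁻¹) =
            (2 ^ Module.finrank ℝ E * μ.real (ball 0 1)) ^ (1 - (2 * p)⁻¹) *
              R ^ (Module.finrank ℝ E * (1 - (2 * p)⁻¹)) := by
          rw [mul_pow, mul_right_comm, Real.mul_rpow (by positivity) (by positivity),
            ← Real.rpow_natCast R, ← Real.rpow_mul hR.le]
        rw [← ENNReal.ofReal_mul (by positivity), hball, Real.rpow_sub hR, Real.rpow_sub hR,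
          Real.rpow_one]
        field_simp

end

/-- Estimate (3.17)–(3.18): with `p₀ > N/2`, `γ₀ = N(1-1/p₀) - (N-2) > 0`, and
`sup` of `‖|b|²‖_{L^{p₀}(Ω)}` bounded by `K`, for a cutoff `η` with
`|Dη| ≤ 1/R` supported in `Ω_{2R}` and `N(v) ≥ R^γ` on `Ω_{2R}`, one has
`∫_Ω |b||Dη|/N(v) ≤ C(K,N) R^{N-2+γ₀/2-γ}`; consequently, if `γ < γ₀/2`, the
bound `∫_Ω |b||Dη|/N(v) ≤ C R^{N-2}` holds. -/
theorem stmt_17 {N : ℕ} (hN : 2 ≤ N) (p₀ K : ℝ) (hp₀ : (N : ℝ) / 2 < p₀)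
    (hK : 0 ≤ K) :
    (0 : ℝ) < (N : ℝ) * (1 - 1 / p₀) - ((N : ℝ) - 2) ∧
    ∃ C : ℝ, 0 < C ∧
      ∀ (Ω : Set (EuclideanSpace ℝ (Fin N))), MeasurableSet Ω →
        Bornology.IsBounded Ω →
        ∀ (R γ : ℝ), 0 < R → R ≤ 1 → 0 < γ →
        ∀ (b Nv η Dη : EuclideanSpace ℝ (Fin N) → ℝ),
          Measurable b → Measurable Nv → Measurable Dη →
          (∀ x, 0 ≤ Nv x) →
          (∀ x ∈ Ω ∩ ball (0 : EuclideanSpace ℝ (Fin N)) (2 * R), R ^ γ ≤ Nv x) →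
          (∀ x, |Dη x| ≤ 1 / R) →
          (∀ x, x ∉ Ω ∩ ball (0 : EuclideanSpace ℝ (Fin N)) (2 * R) → Dη x = 0) →
          eLpNorm (fun x => |b x| ^ 2) (ENNReal.ofReal p₀) (volume.restrict Ω) ≤
            ENNReal.ofReal K →
          (∫⁻ x in Ω, ENNReal.ofReal (|b x| * |Dη x| / Nv x) ≤
            ENNReal.ofReal (C * R ^ ((N : ℝ) - 2 +
              ((N : ℝ) * (1 - 1 / p₀) - ((N : ℝ) - 2)) / 2 - γ))) ∧
          (γ < ((N : ℝ) * (1 - 1 / p₀) - ((N : ℝ) - 2)) / 2 →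
            ∫⁻ x in Ω, ENNReal.ofReal (|b x| * |Dη x| / Nv x) ≤
              ENNReal.ofReal (C * R ^ ((N : ℝ) - 2))) := by
  have hp₀_pos : 0 < p₀ := lt_of_le_of_lt (by positivity) hp₀
  have hp : 1 ≤ 2 * p₀ := by
    have : (2 : ℝ) ≤ N := by exact_mod_cast hN
    linarith
  have hγ₀ : (N : ℝ) * (1 - 1 / p₀) - ((N : ℝ) - 2) = 2 - N / p₀ := by field_simp; ring
  have hexp : ∀ γ : ℝ, (N : ℝ) - 2 + (2 - N / p₀) / 2 - γ = N * (1 - (2 * p₀)⁻¹) - 1 - γ := by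
    intro γ; field_simp; ring
  refine ⟨by rw [hγ₀, sub_pos, div_lt_iff₀ hp₀_pos]; linarith, ?_⟩
  set c := √K * (2 ^ N * volume.real (ball (0 : EuclideanSpace ℝ (Fin N)) 1)) ^ (1 - (2 * p₀)⁻¹)
  refine ⟨c + 1, by positivity, ?_⟩
  intro Ω hΩ _ R γ hR hR1 _ b Nv _ Dη hb _ _ _ hNv hDη hDη_zero hbK
  have hmain := setLIntegral_ofReal_mul_div_le_rpow hΩ hR hp hK hb hNv hDη hDη_zero hbK
  rw [finrank_euclideanSpace_fin] at hmain
  have hbound : ∫⁻ x in Ω, ENNReal.ofReal (|b x| * |Dη x| / Nv x) ≤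
      ENNReal.ofReal ((c + 1) * R ^ ((N : ℝ) - 2 + (2 - N / p₀) / 2 - γ)) := by
    refine hmain.trans (ENNReal.ofReal_le_ofReal ?_)
    rw [hexp]
    gcongr
    linarith
  rw [hγ₀]
  refine ⟨hbound, fun hγ => hbound.trans (ENNReal.ofReal_le_ofReal ?_)⟩
  exact mul_le_mul_of_nonneg_left (Real.rpow_le_rpow_of_exponent_ge hR hR1 (by linarith))
    (by positivity)
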